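/- arXiv:1408.5099 — 2 statements merged into one kernel-verified Lean document; each statement's English description precedes it below -/
import Mathlib

section
/- Let A be a real n×d matrix and let α > 0. Then there exists a diagonal matrix W ∈ ℝ^{n×n} with all diagonal entries in [0,1], such that the number of indices i with W_{ii} ≠ 1 is at most d/α, and τ_i(WA) ≤ α for every i ∈ {1,…,n}. -/
open Matrix
open scoped Classical

/-- The leverage score of row `i` of `M`:
`τᵢ(M) = inf {‖x‖₂² : Mᵀx = mᵢ}` (the set is nonempty since `x = eᵢ` works). -/
noncomputable def lev {n d : ℕ} (M : Matrix (Fin n) (Fin d) ℝ) (i : Fin n) : ℝ :=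
  sInf {t : ℝ | ∃ x : Fin n → ℝ, Mᵀ *ᵥ x = M i ∧ t = ∑ j, (x j) ^ 2}

/-!
Fix a ridge parameter `δ > 0` and replace `τᵢ` by the ridge leverage score
`τᵢᵟ(A) = aᵢᵀ (AᵀA + δI)⁻¹ aᵢ`. Along the reweightings `WA` it is continuous in the weights,
it can only decrease when the other weights grow, and `∑ᵢ τᵢᵟ ≤ d`. Maximise `∑ wᵢ` over the
compact set of weights in `[0,1]ⁿ` with every `τᵢᵟ(WA) ≤ α`: a row with `wᵢ < 1` could be raised
unless `τᵢᵟ(WA) = α`, so at most `d/α` weights differ from `1`. These feasible sets shrink as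
`δ ↓ 0`, so by Cantor's intersection theorem one weight vector works for every `δ`; finally
`τᵢ ≤ α` because `x = M u`, with `MᵀM u = mᵢ`, satisfies `‖x‖² ≤ τᵢᵟ + δ‖u‖²` for all `δ > 0`.
-/

open Finset Filter Topology

namespace Matrix

section Quadratic

variable {n R : Type*} [Fintype n]

theorem IsSymm.dotProduct_mulVec_comm [CommSemiring R] {G : Matrix n n R} (hG : G.IsSymm)
    (v w : n → R) : v ⬝ᵥ (G *ᵥ w) = w ⬝ᵥ (G *ᵥ v) := by
  rw [dotProduct_mulVec, ← hG.eq, vecMul_transpose, dotProduct_comm, hG.eq]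

variable [DecidableEq n]

theorem mulVec_nonsing_inv_mulVec [CommRing R] {G : Matrix n n R} (hG : IsUnit G.det)
    (a : n → R) : G *ᵥ (G⁻¹ *ᵥ a) = a := by
  rw [mulVec_mulVec, mul_nonsing_inv _ hG, one_mulVec]

/-- Equality holds at `v = G⁻¹ a`. -/
theorem PosDef.two_mul_dotProduct_sub_le {G : Matrix n n ℝ} (hG : G.PosDef) (a v : n → ℝ) :
    2 * (v ⬝ᵥ a) - v ⬝ᵥ (G *ᵥ v) ≤ a ⬝ᵥ (G⁻¹ *ᵥ a) := by
  set y := G⁻¹ *ᵥ a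
  have hGy : G *ᵥ y = a := mulVec_nonsing_inv_mulVec hG.det_pos.ne'.isUnit a
  have hsymm : y ⬝ᵥ (G *ᵥ v) = v ⬝ᵥ a := by
    rw [(show G.IsSymm by simpa using hG.isHermitian).dotProduct_mulVec_comm, hGy]
  have hsq := hG.posSemidef.dotProduct_mulVec_nonneg (v - y)
  simp only [star_trivial, mulVec_sub, dotProduct_sub, sub_dotProduct, hGy, hsymm] at hsq
  rw [dotProduct_comm a]
  linarith

theorem PosDef.dotProduct_inv_mulVec_le {P Q : Matrix n n ℝ} (hP : P.PosDef)
    (hPQ : (Q - P).PosSemidef) (a : n → ℝ) :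
    a ⬝ᵥ (Q⁻¹ *ᵥ a) ≤ a ⬝ᵥ (P⁻¹ *ᵥ a) := by
  have hQ : Q.PosDef := by simpa using hP.add_posSemidef hPQ
  set y := Q⁻¹ *ᵥ a
  have hQy : Q *ᵥ y = a := mulVec_nonsing_inv_mulVec hQ.det_pos.ne'.isUnit a
  have hPQy := hPQ.dotProduct_mulVec_nonneg y
  simp only [star_trivial, sub_mulVec, dotProduct_sub, hQy] at hPQy
  have := hP.two_mul_dotProduct_sub_le a y
  rw [dotProduct_comm a]
  linarith

end Quadratic

theorem exists_transpose_mul_self_mulVec_eq {m n R : Type*} [Fintype m] [Fintype n]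
    [Field R] [LinearOrder R] [IsStrictOrderedRing R] (M : Matrix m n R) (v : m → R) :
    ∃ u, (Mᵀ * M) *ᵥ u = Mᵀ *ᵥ v := by
  have hrange : LinearMap.range (Mᵀ * M).mulVecLin = LinearMap.range Mᵀ.mulVecLin := by
    refine Submodule.eq_of_le_of_finrank_eq ?_ ?_
    · rw [mulVecLin_mul]
      exact LinearMap.range_comp_le_range _ _
    · change (Mᵀ * M).rank = Mᵀ.rank
      rw [rank_transpose_mul_self, rank_transpose]
  obtain ⟨u, hu⟩ : Mᵀ *ᵥ v ∈ LinearMap.range (Mᵀ * M).mulVecLin := hrange ▸ ⟨v, rfl⟩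
  exact ⟨u, hu⟩

section Diagonal

variable {m n R : Type*} [Fintype m] [DecidableEq m] [CommSemiring R]

theorem diagonal_mul_row (w : m → R) (A : Matrix m n R) (i : m) :
    (diagonal w * A) i = w i • A i :=
  funext fun j => diagonal_mul w A i j

theorem transpose_mul_self_diagonal_mul (w : m → R) (A : Matrix m n R) :
    (diagonal w * A)ᵀ * (diagonal w * A) = Aᵀ * diagonal (w * w) * A := by
  rw [transpose_mul, diagonal_transpose, Matrix.mul_assoc, ← Matrix.mul_assoc (diagonal w),
    diagonal_mul_diagonal, ← Matrix.mul_assoc]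
  rfl

end Diagonal

noncomputable section Ridge

variable {m n : Type*} [Fintype m] [Fintype n] [DecidableEq n]

def ridgeGram (A : Matrix m n ℝ) (δ : ℝ) : Matrix n n ℝ := Aᵀ * A + δ • 1

/-- Unlike `τᵢ`, the ridge leverage score `aᵢᵀ (AᵀA + δI)⁻¹ aᵢ` depends continuously on `A`. -/
def ridgeLev (A : Matrix m n ℝ) (δ : ℝ) (i : m) : ℝ := A i ⬝ᵥ ((ridgeGram A δ)⁻¹ *ᵥ A i)

variable {A : Matrix m n ℝ} {δ : ℝ}

theorem posDef_ridgeGram (A : Matrix m n ℝ) (hδ : 0 < δ) : (ridgeGram A δ).PosDef := by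
  simpa [ridgeGram] using
    PosDef.posSemidef_add (posSemidef_conjTranspose_mul_self A) (PosDef.one.smul hδ)

theorem ridgeLev_nonneg (hδ : 0 < δ) (i : m) : 0 ≤ ridgeLev A δ i := by
  simpa [ridgeLev] using (posDef_ridgeGram A hδ).posSemidef.inv.dotProduct_mulVec_nonneg (A i)

theorem ridgeLev_le_of_le {δ' : ℝ} (hδ : 0 < δ) (hδδ' : δ ≤ δ') (i : m) :
    ridgeLev A δ' i ≤ ridgeLev A δ i := by
  refine (posDef_ridgeGram A hδ).dotProduct_inv_mulVec_le ?_ _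
  have : ridgeGram A δ' - ridgeGram A δ = diagonal fun _ => δ' - δ := by
    rw [ridgeGram, ridgeGram, ← smul_one_eq_diagonal, sub_smul]
    abel
  rw [this]
  exact PosSemidef.diagonal fun _ => sub_nonneg.mpr hδδ'

theorem sum_ridgeLev_le (hδ : 0 < δ) : ∑ i, ridgeLev A δ i ≤ Fintype.card n := by
  set H := (ridgeGram A δ)⁻¹
  have htrace : ∑ i, ridgeLev A δ i = trace (Aᵀ * A * H) := by
    rw [Matrix.mul_assoc, trace_mul_comm]
    simp only [ridgeLev, trace, diag, mul_apply, transpose_apply, dotProduct, mulVec,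
      Finset.mul_sum, Finset.sum_mul]
    refine Finset.sum_congr rfl fun i _ => ?_
    rw [Finset.sum_comm]
    exact Finset.sum_congr rfl fun _ _ => Finset.sum_congr rfl fun _ _ => by ring
  have hgram : Aᵀ * A * H = 1 - δ • H := by
    rw [show Aᵀ * A = ridgeGram A δ - δ • 1 by rw [ridgeGram]; abel, sub_mul,
      mul_nonsing_inv _ (posDef_ridgeGram A hδ).det_pos.ne'.isUnit, smul_one_mul]
  have hH : 0 ≤ trace H := (posDef_ridgeGram A hδ).posSemidef.inv.trace_nonneg
  rw [htrace, hgram, trace_sub, trace_smul, trace_one, smul_eq_mul]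
  linarith [mul_nonneg hδ.le hH]

theorem _root_.Continuous.matrix_ridgeLev {X : Type*} [TopologicalSpace X]
    {f : X → Matrix m n ℝ} (hf : Continuous f) (hδ : 0 < δ) (i : m) :
    Continuous fun x => ridgeLev (f x) δ i := by
  have hG : Continuous fun x => ridgeGram (f x) δ :=
    (hf.matrix_transpose.matrix_mul hf).add continuous_const
  have hinv : Continuous fun x => (ridgeGram (f x) δ)⁻¹ := by
    refine continuous_iff_continuousAt.mpr fun x =>
      (continuousAt_matrix_inv _ ?_).comp hG.continuousAt
    rw [Ring.inverse_eq_inv']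
    exact continuousAt_inv₀ (posDef_ridgeGram (f x) hδ).det_pos.ne'
  have hrow : Continuous fun x => f x i := (continuous_apply i).comp hf
  exact hrow.dotProduct (hinv.matrix_mulVec hrow)

theorem ridgeLev_diagonal_mul_le [DecidableEq m] {w w' : m → ℝ} (hδ : 0 < δ)
    (hw : ∀ k, w k ^ 2 ≤ w' k ^ 2) {i : m} (hi : w i = w' i) :
    ridgeLev (diagonal w' * A) δ i ≤ ridgeLev (diagonal w * A) δ i := by
  unfold ridgeLev
  rw [diagonal_mul_row, diagonal_mul_row, hi]
  refine (posDef_ridgeGram _ hδ).dotProduct_inv_mulVec_le ?_ _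
  have hsub : ridgeGram (diagonal w' * A) δ - ridgeGram (diagonal w * A) δ =
      Aᵀ * diagonal (w' * w' - w * w) * A := by
    rw [ridgeGram, ridgeGram, transpose_mul_self_diagonal_mul, transpose_mul_self_diagonal_mul,
      add_sub_add_right_eq_sub, ← Matrix.sub_mul, ← Matrix.mul_sub, diagonal_sub]
    rfl
  have hd : 0 ≤ w' * w' - w * w := fun k => by
    simp only [Pi.zero_apply, Pi.sub_apply, Pi.mul_apply]
    nlinarith [hw k]
  rw [hsub]
  simpa using (PosSemidef.diagonal hd).conjTranspose_mul_mul_same A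

end Ridge

end Matrix

theorem lowerSemicontinuous_card_filter_ne {ι X : Type*} [Fintype ι] [TopologicalSpace X]
    [T1Space X] [DecidableEq X] (c : X) :
    LowerSemicontinuous fun w : ι → X => (#{i | w i ≠ c} : ℝ) := by
  intro w y hy
  have hsub : ∀ᶠ v in 𝓝 w, ∀ i ∈ ({i | w i ≠ c} : Finset ι), v i ≠ c :=
    (eventually_all_finset _).mpr fun i hi =>
      ((continuous_apply i).tendsto w).eventually (eventually_ne_nhds (mem_filter.mp hi).2)
  filter_upwards [hsub] with v hv
  exact hy.trans_le
    (Nat.cast_le.mpr (card_le_card fun i hi => mem_filter.mpr ⟨mem_univ i, hv i hi⟩))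

section Reweighting

variable {m n : Type*} [Fintype m] [DecidableEq m] [Fintype n] [DecidableEq n]
  (A : Matrix m n ℝ) {δ α : ℝ}

theorem continuous_ridgeLev_diagonal_mul (hδ : 0 < δ) (i : m) :
    Continuous fun w : m → ℝ => ridgeLev (diagonal w * A) δ i :=
  (continuous_id.matrix_diagonal.matrix_mul continuous_const).matrix_ridgeLev hδ i

def ridgeFeasible (δ α : ℝ) : Set (m → ℝ) :=
  Set.Icc 0 1 ∩ {w | ∀ i, ridgeLev (diagonal w * A) δ i ≤ α}

theorem isCompact_ridgeFeasible (hδ : 0 < δ) : IsCompact (ridgeFeasible A δ α) := by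
  refine isCompact_Icc.inter_right ?_
  simp only [Set.ofPred_forall]
  exact isClosed_iInter fun i =>
    isClosed_le (continuous_ridgeLev_diagonal_mul A hδ i) continuous_const

theorem zero_mem_ridgeFeasible (hα : 0 ≤ α) : 0 ∈ ridgeFeasible A δ α :=
  ⟨Set.left_mem_Icc.mpr zero_le_one, fun i => by
    rwa [ridgeLev, diagonal_mul_row, Pi.zero_apply, zero_smul, zero_dotProduct]⟩

theorem ridgeFeasible_mono {δ' : ℝ} (hδ : 0 < δ) (hδδ' : δ ≤ δ') :
    ridgeFeasible A δ α ⊆ ridgeFeasible A δ' α :=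
  fun _ hw => ⟨hw.1, fun i => (ridgeLev_le_of_le hδ hδδ' i).trans (hw.2 i)⟩

/-- Otherwise `wᵢ` could be raised a little: by continuity its own score stays below `α`, and the
other scores only decrease. -/
theorem le_ridgeLev_of_isMaxOn {w : m → ℝ} (hδ : 0 < δ) (hw : w ∈ ridgeFeasible A δ α)
    (hmax : IsMaxOn (fun v => ∑ k, v k) (ridgeFeasible A δ α) w) {i : m} (hi : w i < 1) :
    α ≤ ridgeLev (diagonal w * A) δ i := by
  by_contra! hlt
  set p : ℝ → m → ℝ := fun t => Function.update w i (w i + t)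
  have hp0 : p 0 = w := by simp [p]
  have hp : Continuous p := continuous_const.update i (continuous_const.add continuous_id)
  have hlev : ∀ᶠ t in 𝓝 0, ridgeLev (diagonal (p t) * A) δ i < α :=
    ((continuous_ridgeLev_diagonal_mul A hδ i).comp hp).continuousAt.eventually_lt
      continuousAt_const (by simpa [hp0] using hlt)
  have hsmall : ∀ᶠ t in 𝓝 (0 : ℝ), t < 1 - w i := eventually_lt_nhds (by linarith)
  obtain ⟨t, ⟨hτ, ht1⟩, ht0 : 0 < t⟩ :=
    (((hlev.and hsmall).filter_mono nhdsWithin_le_nhds).and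
      (eventually_mem_nhdsWithin (s := Set.Ioi 0))).exists
  have hsq : ∀ k, w k ^ 2 ≤ p t k ^ 2 := fun k => by
    rcases eq_or_ne k i with rfl | hk
    · simp only [p, Function.update_self]
      nlinarith [show 0 ≤ w k from hw.1.1 k]
    · simp [p, Function.update_of_ne hk]
  have hpt : p t ∈ ridgeFeasible A δ α := by
    refine ⟨⟨fun k => ?_, fun k => ?_⟩, fun k => ?_⟩ <;> rcases eq_or_ne k i with rfl | hk
    · simpa [p] using add_nonneg (hw.1.1 k) ht0.le
    · simpa [p, Function.update_of_ne hk] using hw.1.1 k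
    · simp only [p, Function.update_self, Pi.one_apply]; linarith
    · simpa [p, Function.update_of_ne hk] using hw.1.2 k
    · exact hτ.le
    · exact (ridgeLev_diagonal_mul_le hδ hsq (Function.update_of_ne hk _ _).symm).trans (hw.2 k)
  have hsum : ∑ k, p t k ≤ ∑ k, w k := hmax hpt
  rw [Finset.sum_update_of_mem (Finset.mem_univ i),
    Finset.sum_eq_add_sum_sdiff_singleton_of_mem (Finset.mem_univ i) w] at hsum
  linarith

theorem card_mul_le_of_isMaxOn {w : m → ℝ} (hδ : 0 < δ) (hw : w ∈ ridgeFeasible A δ α)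
    (hmax : IsMaxOn (fun v => ∑ k, v k) (ridgeFeasible A δ α) w) :
    (#{i | w i ≠ 1} : ℝ) * α ≤ Fintype.card n :=
  calc (#{i | w i ≠ 1} : ℝ) * α = ∑ i ∈ {i | w i ≠ 1}, α := by simp
    _ ≤ ∑ i ∈ {i | w i ≠ 1}, ridgeLev (diagonal w * A) δ i := sum_le_sum fun i hi =>
      le_ridgeLev_of_isMaxOn A hδ hw hmax ((hw.1.2 i).lt_of_ne (mem_filter.mp hi).2)
    _ ≤ ∑ i, ridgeLev (diagonal w * A) δ i :=
      sum_le_sum_of_subset_of_nonneg (subset_univ _) fun i _ _ => ridgeLev_nonneg hδ i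
    _ ≤ Fintype.card n := sum_ridgeLev_le hδ

theorem exists_mem_ridgeFeasible_card_le (hα : 0 < α) (hδ : 0 < δ) :
    ∃ w ∈ ridgeFeasible A δ α, (#{i | w i ≠ 1} : ℝ) ≤ Fintype.card n / α := by
  obtain ⟨w, hw, hmax⟩ := (isCompact_ridgeFeasible A hδ).exists_isMaxOn
    ⟨0, zero_mem_ridgeFeasible A hα.le⟩
    (continuous_finsetSum _ fun k _ => continuous_apply k).continuousOn
  exact ⟨w, hw, (le_div_iff₀ hα).mpr (card_mul_le_of_isMaxOn A hδ hw hmax)⟩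

end Reweighting

theorem lev_le_of_forall_ridgeLev_le {n d : ℕ} (M : Matrix (Fin n) (Fin d) ℝ) (i : Fin n)
    {α : ℝ} (h : ∀ δ > 0, ridgeLev M δ i ≤ α) : lev M i ≤ α := by
  obtain ⟨u, hu⟩ := M.exists_transpose_mul_self_mulVec_eq (Pi.single i 1)
  replace hu : (Mᵀ * M) *ᵥ u = M i := by rwa [mulVec_single_one] at hu
  have hx : Mᵀ *ᵥ (M *ᵥ u) = M i := by rw [mulVec_mulVec, hu]
  have hnorm : ∑ j, (M *ᵥ u) j ^ 2 = u ⬝ᵥ M i := by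
    rw [← hu, ← mulVec_mulVec, dotProduct_mulVec, vecMul_transpose]
    simp [dotProduct, sq]
  have hreg : ∀ δ > 0, u ⬝ᵥ M i ≤ α + δ * (u ⬝ᵥ u) := fun δ hδ => by
    have hquad : u ⬝ᵥ (ridgeGram M δ *ᵥ u) = u ⬝ᵥ M i + δ * (u ⬝ᵥ u) := by
      rw [ridgeGram, add_mulVec, hu, smul_mulVec, one_mulVec, dotProduct_add, dotProduct_smul,
        smul_eq_mul]
    have hvar := (posDef_ridgeGram M hδ).two_mul_dotProduct_sub_le (M i) u
    have hδα : M i ⬝ᵥ ((ridgeGram M δ)⁻¹ *ᵥ M i) ≤ α := h δ hδ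
    rw [hquad] at hvar
    linarith
  have hlim : Tendsto (fun δ => α + δ * (u ⬝ᵥ u)) (𝓝[>] 0) (𝓝 α) :=
    ((continuous_const.add (continuous_id.mul continuous_const)).tendsto' 0 α
      (by simp)).mono_left nhdsWithin_le_nhds
  calc lev M i ≤ ∑ j, (M *ᵥ u) j ^ 2 :=
        csInf_le ⟨0, fun _ ⟨_, _, ht⟩ => ht ▸ sum_nonneg fun _ _ => sq_nonneg _⟩ ⟨_, hx, rfl⟩
    _ = u ⬝ᵥ M i := hnorm
    _ ≤ α := ge_of_tendsto hlim (eventually_nhdsWithin_of_forall hreg)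

/-- coherence reducing reweighting: for any `A ∈ ℝ^{n×d}` and `α > 0`,
there is a diagonal `W` with entries in `[0,1]`, at most `d/α` of which differ from `1`,
such that `τᵢ(WA) ≤ α` for every `i`. -/
theorem stmt9 {n d : ℕ} (A : Matrix (Fin n) (Fin d) ℝ) (α : ℝ) (hα : 0 < α) :
    ∃ w : Fin n → ℝ,
      (∀ i, 0 ≤ w i ∧ w i ≤ 1) ∧
      ((Finset.univ.filter (fun i => w i ≠ 1)).card : ℝ) ≤ (d : ℝ) / α ∧
      (∀ i, lev (Matrix.diagonal w * A) i ≤ α) := by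
  set C : Set.Ioi (0 : ℝ) → Set (Fin n → ℝ) := fun δ =>
    ridgeFeasible A δ α ∩ {w | (#{i | w i ≠ 1} : ℝ) ≤ d / α}
  have hcount : IsClosed {w : Fin n → ℝ | (#{i | w i ≠ 1} : ℝ) ≤ d / α} :=
    (lowerSemicontinuous_card_filter_ne 1).isClosed_preimage _
  have hcompact : ∀ δ, IsCompact (C δ) := fun δ =>
    (isCompact_ridgeFeasible A δ.2).inter_right hcount
  obtain ⟨w, hw⟩ := IsCompact.nonempty_iInter_of_directed_nonempty_isCompact_isClosed C
    (Monotone.directed_ge fun δ _ hδδ' =>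
      Set.inter_subset_inter_left _ (ridgeFeasible_mono A δ.2 hδδ'))
    (fun δ => by
      obtain ⟨w, hw, hcard⟩ := exists_mem_ridgeFeasible_card_le A hα δ.2
      exact ⟨w, hw, by simpa using hcard⟩)
    hcompact (fun δ => (hcompact δ).isClosed)
  rw [Set.mem_iInter] at hw
  obtain ⟨⟨hw01, -⟩, hcard⟩ := hw ⟨1, Set.mem_Ioi.mpr one_pos⟩
  exact ⟨w, fun i => ⟨hw01.1 i, hw01.2 i⟩, hcard,
    fun i => lev_le_of_forall_ridgeLev_le _ i fun δ hδ => (hw ⟨δ, hδ⟩).1.2 i⟩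
end

section
/- Let A be a real n×d matrix with rows a_1,…,a_n, let γ ∈ (0,1) and i ∈ {1,…,n}, and let W be the n×n diagonal matrix with W_{ii} = √(1−γ) and W_{jj} = 1 for all j ≠ i. Then τ_i(WA)·(1 − γ·τ_i(A)) = (1−γ)·τ_i(A), i.e. τ_i(WA) = (1−γ)τ_i(A)/(1−γτ_i(A)), and consequently τ_i(WA) ≤ τ_i(A). (Note γτ_i(A) < 1 since τ_i(A) ≤ 1 and γ < 1.) -/
open Matrix

/-! The infimum defining `τᵢ(M)` is attained at any solution `u` of `Mᵀu = mᵢ` orthogonal to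
`ker Mᵀ` (Pythagoras), and such a `u` exists because `range (MᵀM) = range Mᵀ`; testing
orthogonality against `eᵢ - u ∈ ker Mᵀ` gives `τᵢ(M) = ‖u‖² = uᵢ`.

For `B = WA`, the vector `Wu` is orthogonal to `ker Bᵀ`, since `(Wu)·z = u·(Wz)` and
`Wz ∈ ker Aᵀ` whenever `z ∈ ker Bᵀ`. As `W²u = u - γuᵢeᵢ`, we get `Bᵀ(Wu) = (1 - γτ) aᵢ`, so
`x = wᵢ/(1 - γτ) · Wu` solves `Bᵀx = bᵢ` and
`τᵢ(B) = ‖x‖² = wᵢ² (‖u‖² - γuᵢ²)/(1 - γτ)² = (1 - γ)τ/(1 - γτ)`. -/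

namespace Matrix

theorem range_mulVecLin_transpose_mul_self {m n R : Type*} [Fintype m] [Fintype n] [Field R]
    [LinearOrder R] [IsStrictOrderedRing R] (A : Matrix m n R) :
    LinearMap.range (Aᵀ * A).mulVecLin = LinearMap.range Aᵀ.mulVecLin := by
  refine Submodule.eq_of_le_of_finrank_eq ?_ ?_
  · rw [mulVecLin_mul]
    exact LinearMap.range_comp_le_range _ _
  · change (Aᵀ * A).rank = Aᵀ.rank
    rw [rank_transpose_mul_self, rank_transpose]

section CommSemiring

variable {m l R : Type*} [Fintype m] [DecidableEq m]

theorem transpose_mulVec_single [CommSemiring R] (M : Matrix m l R) (i : m) (c : R) :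
    Mᵀ *ᵥ Pi.single i c = c • M i := by
  ext k
  simp [mulVec_single, mul_comm]

theorem diagonal_mulVec_diagonal_mulVec [CommRing R] {w : m → R} {i : m} {γ : R}
    (hw : w * w = 1 - Pi.single i γ) (v : m → R) :
    diagonal w *ᵥ (diagonal w *ᵥ v) = v - Pi.single i (γ * v i) := by
  ext j
  have hj := congrFun hw j
  rcases eq_or_ne j i with rfl | hne
  · simp only [Pi.mul_apply, Pi.sub_apply, Pi.one_apply, Pi.single_eq_same] at hj
    simp only [mulVec_diagonal, Pi.sub_apply, Pi.single_eq_same]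
    linear_combination v j * hj
  · simp only [Pi.mul_apply, Pi.sub_apply, Pi.one_apply, Pi.single_eq_of_ne hne, sub_zero] at hj
    simp only [mulVec_diagonal, Pi.sub_apply, Pi.single_eq_of_ne hne, sub_zero]
    linear_combination v j * hj

theorem diagonal_mulVec_dotProduct [CommSemiring R] (w u z : m → R) :
    (diagonal w *ᵥ u) ⬝ᵥ z = u ⬝ᵥ (diagonal w *ᵥ z) := by
  rw [← diagonal_transpose, mulVec_transpose, ← dotProduct_mulVec, diagonal_transpose]

theorem transpose_diagonal_mul_mulVec [CommSemiring R] (w : m → R) (M : Matrix m l R)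
    (z : m → R) : (diagonal w * M)ᵀ *ᵥ z = Mᵀ *ᵥ (diagonal w *ᵥ z) := by
  rw [transpose_mul, diagonal_transpose, mulVec_mulVec]

end CommSemiring

end Matrix

section leverage

variable {n d : ℕ} (M : Matrix (Fin n) (Fin d) ℝ) (i : Fin n)

theorem lev_le_dotProduct_self {x : Fin n → ℝ} (hx : Mᵀ *ᵥ x = M i) :
    lev M i ≤ x ⬝ᵥ x :=
  csInf_le ⟨0, by rintro t ⟨y, -, rfl⟩; positivity⟩ ⟨x, hx, by simp only [dotProduct, sq]⟩

theorem lev_nonneg : 0 ≤ lev M i :=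
  Real.sInf_nonneg (by rintro t ⟨y, -, rfl⟩; positivity)

theorem lev_le_one : lev M i ≤ 1 :=
  (lev_le_dotProduct_self M i (by rw [transpose_mulVec_single, one_smul])).trans_eq (by simp)

theorem lev_eq_dotProduct_self_of_orthogonal {x : Fin n → ℝ} (hx : Mᵀ *ᵥ x = M i)
    (horth : ∀ z, Mᵀ *ᵥ z = 0 → x ⬝ᵥ z = 0) : lev M i = x ⬝ᵥ x := by
  refine (lev_le_dotProduct_self M i hx).antisymm (le_csInf ⟨_, x, hx, rfl⟩ ?_)
  rintro t ⟨y, hy, rfl⟩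
  have hxy : x ⬝ᵥ (y - x) = 0 := horth _ (by rw [mulVec_sub, hy, hx, sub_self])
  have hyx : 0 ≤ (y - x) ⬝ᵥ (y - x) := Finset.sum_nonneg fun j _ => mul_self_nonneg _
  have hpyth : y ⬝ᵥ y = x ⬝ᵥ x + (y - x) ⬝ᵥ (y - x) := by
    simp only [dotProduct_sub, sub_dotProduct, dotProduct_comm y x] at hxy ⊢
    linarith
  calc x ⬝ᵥ x ≤ y ⬝ᵥ y := by linarith
    _ = ∑ j, y j ^ 2 := by simp only [dotProduct, sq]

theorem exists_transpose_mulVec_eq_orthogonal :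
    ∃ u, Mᵀ *ᵥ u = M i ∧ ∀ z, Mᵀ *ᵥ z = 0 → u ⬝ᵥ z = 0 := by
  obtain ⟨c, hc⟩ : M i ∈ LinearMap.range (Mᵀ * M).mulVecLin := by
    rw [range_mulVecLin_transpose_mul_self, ← one_smul ℝ (M i), ← transpose_mulVec_single]
    exact LinearMap.mem_range_self _ _
  refine ⟨M *ᵥ c, by rwa [mulVec_mulVec], fun z hz => ?_⟩
  rw [dotProduct_comm, dotProduct_mulVec, ← mulVec_transpose, hz, zero_dotProduct]

theorem apply_eq_dotProduct_self_of_orthogonal {u : Fin n → ℝ} (hu : Mᵀ *ᵥ u = M i)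
    (horth : ∀ z, Mᵀ *ᵥ z = 0 → u ⬝ᵥ z = 0) : u i = u ⬝ᵥ u := by
  have h := horth (Pi.single i 1 - u)
    (by rw [mulVec_sub, transpose_mulVec_single, one_smul, hu, sub_self])
  rwa [dotProduct_sub, dotProduct_single, mul_one, sub_eq_zero] at h

theorem lev_diagonal_mul_mul_one_sub {w : Fin n → ℝ} {γ : ℝ} (hw : w * w = 1 - Pi.single i γ)
    (hδ : 1 - γ * lev M i ≠ 0) :
    lev (diagonal w * M) i * (1 - γ * lev M i) = (1 - γ) * lev M i := by
  obtain ⟨u, hu, horth⟩ := exists_transpose_mulVec_eq_orthogonal M i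
  have hui := apply_eq_dotProduct_self_of_orthogonal M i hu horth
  rw [lev_eq_dotProduct_self_of_orthogonal M i hu horth] at hδ ⊢
  have hwi : w i * w i = 1 - γ := by simpa using congrFun hw i
  set x := (w i / (1 - γ * u ⬝ᵥ u)) • (diagonal w *ᵥ u)
  have hx : (diagonal w * M)ᵀ *ᵥ x = (diagonal w * M) i := by
    rw [transpose_diagonal_mul_mulVec, mulVec_smul, mulVec_smul,
      diagonal_mulVec_diagonal_mulVec hw, mulVec_sub, hu, transpose_mulVec_single, hui]
    ext k
    simp only [Pi.smul_apply, Pi.sub_apply, smul_eq_mul, diagonal_mul]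
    field_simp
  have horth' : ∀ z, (diagonal w * M)ᵀ *ᵥ z = 0 → x ⬝ᵥ z = 0 := fun z hz => by
    rw [transpose_diagonal_mul_mulVec] at hz
    rw [smul_dotProduct, diagonal_mulVec_dotProduct, horth _ hz, smul_zero]
  have hxx : x ⬝ᵥ x = w i * w i * (u ⬝ᵥ u) / (1 - γ * u ⬝ᵥ u) := by
    rw [smul_dotProduct, dotProduct_smul, diagonal_mulVec_dotProduct,
      diagonal_mulVec_diagonal_mulVec hw, dotProduct_sub, dotProduct_single, hui, smul_eq_mul,
      smul_eq_mul]
    field_simp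
  rw [lev_eq_dotProduct_self_of_orthogonal _ i hx horth', hxx, hwi, div_mul_cancel₀ _ hδ]

end leverage

/-- rank-one update, reweighted row: if `W` is diagonal with
`Wᵢᵢ = √(1−γ)` and `Wⱼⱼ = 1` for `j ≠ i`, then
`τᵢ(WA)·(1 − γτᵢ(A)) = (1−γ)·τᵢ(A)`, i.e. `τᵢ(WA) = (1−γ)τᵢ(A)/(1−γτᵢ(A))`,
and consequently `τᵢ(WA) ≤ τᵢ(A)`. -/
theorem stmt10 {n d : ℕ} (A : Matrix (Fin n) (Fin d) ℝ) (γ : ℝ)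
    (hγ0 : 0 < γ) (hγ1 : γ < 1) (i : Fin n)
    (w : Fin n → ℝ) (hwi : w i = Real.sqrt (1 - γ)) (hwj : ∀ j ≠ i, w j = 1) :
    lev (Matrix.diagonal w * A) i * (1 - γ * lev A i) = (1 - γ) * lev A i ∧
    lev (Matrix.diagonal w * A) i ≤ lev A i := by
  have hw : w * w = 1 - Pi.single i γ := by
    ext j
    rcases eq_or_ne j i with rfl | hj
    · simp [hwi, Real.mul_self_sqrt (by linarith : 0 ≤ 1 - γ)]
    · simp [hwj j hj, hj]
  have hτ0 := lev_nonneg A i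
  have hτ1 := lev_le_one A i
  have hδ : 0 < 1 - γ * lev A i := by nlinarith
  have key := lev_diagonal_mul_mul_one_sub A i hw hδ.ne'
  refine ⟨key, le_of_mul_le_mul_right ?_ hδ⟩
  rw [key]
  nlinarith [mul_nonneg (mul_nonneg hγ0.le hτ0) (sub_nonneg.2 hτ1)]
end
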